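/- The negative cycle vectors of all signings of K_4 are exactly (0,0), (2,2), and (4,0), where the coordinates count negative triangles and negative 4-cycles respectively. -/

import Mathlib

open Finset

/-- The set of edge sets of cycles of length `l` in `G`, as unoriented cycle subgraphs. -/
def cycleSets {V : Type*} [DecidableEq V] (G : SimpleGraph V) (l : ℕ) : Set (Finset (Sym2 V)) :=
  {C | ∃ (v : V) (w : G.Walk v v), w.IsCycle ∧ w.length = l ∧ w.edges.toFinset = C}

/-- The number of cycles of length `l` in `G`. -/
noncomputable def cycleCount {V : Type*} [DecidableEq V] (G : SimpleGraph V) (l : ℕ) : ℕ :=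
  (cycleSets G l).ncard

/-- The number of negative `l`-cycles of `G` signed with negative edge set `N`:
cycles meeting `N` in an odd number of edges. -/
noncomputable def negCycleCount {V : Type*} [DecidableEq V] (G : SimpleGraph V)
    (N : Finset (Sym2 V)) (l : ℕ) : ℕ :=
  {C | C ∈ cycleSets G l ∧ Odd (C ∩ N).card}.ncard

/-- The number of negative `l`-cycles of `G` with edge sign function `σ`. -/
noncomputable def negCycleCountS {V : Type*} [DecidableEq V] (G : SimpleGraph V)
    (σ : Sym2 V → ℤ) (l : ℕ) : ℕ :=
  {C | C ∈ cycleSets G l ∧ ∏ e ∈ C, σ e = -1}.ncard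

/-- A set of edges is a matching: its members are pairwise vertex-disjoint. -/
def IsMatchingSet {V : Type*} (S : Finset (Sym2 V)) : Prop :=
  ∀ e ∈ S, ∀ f ∈ S, e ≠ f → ∀ v : V, v ∈ e → v ∉ f

/-- The sign multiplier on edges produced by switching at the vertex set `X`. -/
def switchSign {V : Type*} [DecidableEq V] (X : Finset V) : Sym2 V → ℤ :=
  Sym2.lift ⟨fun a b => (if a ∈ X then (-1 : ℤ) else 1) * (if b ∈ X then (-1 : ℤ) else 1),
    fun _ _ => mul_comm _ _⟩

/-- The set of (potential) edges with exactly one endpoint in `X`. -/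
def crossEdges {V : Type*} [Fintype V] [DecidableEq V] (X : Finset V) : Finset (Sym2 V) :=
  (X ×ˢ Xᶜ).image fun p => s(p.1, p.2)

/-! The cycles of length 3 and 4 of a simple graph are the closed walks through 3, resp. 4,
distinct vertices, which lists the four triangles and three 4-cycles of `K₄` explicitly.
Edges of `N` outside the graph lie on no cycle, so the negative cycle vectors of `K₄` are those
of the 64 subsets of its six edges, a finite computation. -/

open SimpleGraph

noncomputable def negCycleVector {V : Type*} [DecidableEq V] (G : SimpleGraph V)
    (N : Finset (Sym2 V)) : ℕ × ℕ :=
  (negCycleCount G N 3, negCycleCount G N 4)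

section CycleSets

variable {V : Type*} [DecidableEq V] (G : SimpleGraph V)

theorem cycleSets_three : cycleSets G 3 =
    {C | ∃ a b c, G.Adj a b ∧ G.Adj b c ∧ G.Adj c a ∧ C = {s(a, b), s(b, c), s(c, a)}} := by
  ext C
  constructor
  · rintro ⟨_, _ | ⟨hab, _ | ⟨hbc, _ | ⟨hca, _ | ⟨_, _⟩⟩⟩⟩, -, hlen, rfl⟩ <;> simp at hlen
    exact ⟨_, _, _, hab, hbc, hca, by simp⟩
  · rintro ⟨a, b, c, hab, hbc, hca, rfl⟩
    refine ⟨a, .cons hab (.cons hbc (.cons hca .nil)), ?_, rfl, by simp⟩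
    simp [Walk.isCycle_def, hab.ne, hab.ne', hbc.ne, hca.ne, hca.ne']

theorem cycleSets_four : cycleSets G 4 =
    {C | ∃ a b c d, G.Adj a b ∧ G.Adj b c ∧ G.Adj c d ∧ G.Adj d a ∧ a ≠ c ∧ b ≠ d ∧
      C = {s(a, b), s(b, c), s(c, d), s(d, a)}} := by
  ext C
  constructor
  · rintro ⟨_, _ | ⟨hab, _ | ⟨hbc, _ | ⟨hcd, _ | ⟨hda, _ | ⟨_, _⟩⟩⟩⟩⟩, hcyc, hlen, rfl⟩ <;>
      simp at hlen
    have hnodup := hcyc.support_nodup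
    simp only [Walk.support_cons, Walk.support_nil, List.tail_cons, List.nodup_cons,
      List.mem_cons, List.not_mem_nil] at hnodup
    exact ⟨_, _, _, _, hab, hbc, hcd, hda, by grind, by grind, by simp⟩
  · rintro ⟨a, b, c, d, hab, hbc, hcd, hda, hac, hbd, rfl⟩
    refine ⟨a, .cons hab (.cons hbc (.cons hcd (.cons hda .nil))), ?_, rfl, by simp⟩
    simp [Walk.isCycle_def, hab.ne', hbc.ne, hcd.ne, hda.ne, hac, hac.symm, hbd]

variable {G}

theorem negCycleCount_eq_card_filter {l : ℕ} {F : Finset (Finset (Sym2 V))}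
    (hF : cycleSets G l = F) (N : Finset (Sym2 V)) :
    negCycleCount G N l = #{C ∈ F | Odd #(C ∩ N)} := by
  rw [negCycleCount, hF, ← Set.ncard_coe_finset, coe_filter]
  rfl

theorem subset_of_mem_cycleSets {l : ℕ} {C E : Finset (Sym2 V)} (hE : G.edgeSet ⊆ E)
    (hC : C ∈ cycleSets G l) : C ⊆ E := by
  obtain ⟨v, w, -, -, rfl⟩ := hC
  exact fun e he => hE (w.edges_subset_edgeSet (List.mem_toFinset.mp he))

theorem negCycleCount_inter_of_edgeSet_subset {E : Finset (Sym2 V)} (hE : G.edgeSet ⊆ E)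
    (N : Finset (Sym2 V)) (l : ℕ) :
    negCycleCount G (N ∩ E) l = negCycleCount G N l := by
  unfold negCycleCount
  congr 1
  ext C
  simp only [Set.mem_ofPred_eq, and_congr_right_iff]
  intro hC
  rw [← inter_assoc, inter_eq_left.mpr (inter_subset_left.trans (subset_of_mem_cycleSets hE hC))]

theorem range_negCycleVector_of_edgeSet_subset {E : Finset (Sym2 V)} (hE : G.edgeSet ⊆ E) :
    Set.range (negCycleVector G) = E.powerset.image (negCycleVector G) := by
  apply subset_antisymm
  · rintro _ ⟨N, rfl⟩
    have hrestrict : negCycleVector G (N ∩ E) = negCycleVector G N := by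
      simp only [negCycleVector, negCycleCount_inter_of_edgeSet_subset hE]
    rw [← hrestrict]
    exact mem_image_of_mem _ (mem_powerset.mpr inter_subset_right)
  · rw [coe_image]
    exact Set.image_subset_range _ _

end CycleSets

def k4Edges : Finset (Sym2 (Fin 4)) :=
  {s(0, 1), s(0, 2), s(0, 3), s(1, 2), s(1, 3), s(2, 3)}

def k4Triangles : Finset (Finset (Sym2 (Fin 4))) :=
  {{s(0, 1), s(0, 2), s(1, 2)}, {s(0, 1), s(0, 3), s(1, 3)},
    {s(0, 2), s(0, 3), s(2, 3)}, {s(1, 2), s(1, 3), s(2, 3)}}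

def k4Squares : Finset (Finset (Sym2 (Fin 4))) :=
  {{s(0, 1), s(1, 2), s(2, 3), s(0, 3)}, {s(0, 1), s(1, 3), s(2, 3), s(0, 2)},
    {s(0, 2), s(1, 2), s(1, 3), s(0, 3)}}

theorem edgeSet_top_fin4_subset : (⊤ : SimpleGraph (Fin 4)).edgeSet ⊆ k4Edges := by
  intro e he
  have hnondiag : ∀ e : Sym2 (Fin 4), ¬ e.IsDiag → e ∈ k4Edges := by decide
  exact hnondiag e (not_isDiag_of_mem_edgeSet _ he)

theorem cycleSets_top_fin4_three : cycleSets (⊤ : SimpleGraph (Fin 4)) 3 = k4Triangles := by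
  rw [cycleSets_three]
  ext C
  simp only [top_adj, ne_eq, Set.mem_ofPred_eq, mem_coe]
  constructor
  · rintro ⟨a, b, c, hab, hbc, hca, rfl⟩
    revert a b c
    decide
  · simp only [k4Triangles, mem_insert, mem_singleton]
    rintro (rfl | rfl | rfl | rfl)
    · exact ⟨0, 1, 2, by decide⟩
    · exact ⟨0, 1, 3, by decide⟩
    · exact ⟨0, 2, 3, by decide⟩
    · exact ⟨1, 2, 3, by decide⟩

theorem cycleSets_top_fin4_four : cycleSets (⊤ : SimpleGraph (Fin 4)) 4 = k4Squares := by
  rw [cycleSets_four]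
  ext C
  simp only [top_adj, ne_eq, Set.mem_ofPred_eq, mem_coe]
  constructor
  · rintro ⟨a, b, c, d, hab, hbc, hcd, hda, hac, hbd, rfl⟩
    revert a b c d
    decide
  · simp only [k4Squares, mem_insert, mem_singleton]
    rintro (rfl | rfl | rfl)
    · exact ⟨0, 1, 2, 3, by decide⟩
    · exact ⟨0, 1, 3, 2, by decide⟩
    · exact ⟨0, 2, 1, 3, by decide⟩

theorem image_powerset_k4Edges_negCycleVector :
    k4Edges.powerset.image (negCycleVector ⊤) = {(0, 0), (2, 2), (4, 0)} := by
  unfold negCycleVector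
  simp only [negCycleCount_eq_card_filter cycleSets_top_fin4_three,
    negCycleCount_eq_card_filter cycleSets_top_fin4_four]
  decide +kernel

theorem range_negCycleVector_top_fin4 :
    Set.range (negCycleVector (⊤ : SimpleGraph (Fin 4))) = {(0, 0), (2, 2), (4, 0)} := by
  rw [range_negCycleVector_of_edgeSet_subset edgeSet_top_fin4_subset,
    image_powerset_k4Edges_negCycleVector]
  simp only [coe_insert, coe_singleton]

/-- The negative cycle vectors `(c_3^-, c_4^-)` of all signings of `K_4`
are exactly `(0,0)`, `(2,2)`, and `(4,0)`. -/
theorem stmt12 :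
    {v : ℝ × ℝ | ∃ N : Finset (Sym2 (Fin 4)),
        v = ((negCycleCount (⊤ : SimpleGraph (Fin 4)) N 3 : ℝ),
             (negCycleCount (⊤ : SimpleGraph (Fin 4)) N 4 : ℝ))}
      = {(0, 0), (2, 2), (4, 0)} := by
  calc _ = Prod.map Nat.cast Nat.cast '' Set.range (negCycleVector (⊤ : SimpleGraph (Fin 4))) := by
        ext v
        simp [negCycleVector, eq_comm]
    _ = _ := by
        rw [range_negCycleVector_top_fin4]
        simp [Set.image_insert_eq]
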